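/- arXiv:2504.11551 — 4 statements merged into one kernel-verified Lean document; each statement's English description precedes it below -/
import Mathlib

section
/- Let A > 0 and B > 0, let s_+ = (1/(2A))(A - B - 1 + sqrt((A-B-1)^2 + 4AB)), and define r_+ = B(1 - s_+)/s_+. Then 0 < r_+ < 1. -/
/-!
`s_+` lies in `(0, 1)`: the discriminant `(B + 1 - A)^2 + 4AB = (A + B + 1)^2 - 4A` traps its square
root strictly between `B + 1 - A` and `A + B + 1`. Rewriting the quadratic equation as
`B (1 - s) = s (1 - A (1 - s))` turns `r_+` into `1 - A (1 - s_+)`, which is below `1`.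
-/

open Real

noncomputable def sPlus (A B : ℝ) : ℝ :=
  (1/(2*A)) * (A - B - 1 + √((A - B - 1)^2 + 4*A*B))

section

variable {A B : ℝ}

lemma sPlus_pos (hA : 0 < A) (hB : 0 < B) : 0 < sPlus A B := by
  have hroot : B + 1 - A < √((A - B - 1)^2 + 4*A*B) :=
    Real.lt_sqrt_of_sq_lt (by nlinarith [mul_pos hA hB])
  unfold sPlus
  exact mul_pos (by positivity) (by linarith)

lemma sPlus_lt_one (hA : 0 < A) (hB : 0 < B) : sPlus A B < 1 := by
  have hroot : √((A - B - 1)^2 + 4*A*B) < A + B + 1 :=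
    (Real.sqrt_lt' (by linarith)).2 (by nlinarith)
  unfold sPlus
  rw [div_mul_eq_mul_div, one_mul, div_lt_one (by positivity)]
  linarith

lemma sPlus_isRoot (hA : A ≠ 0) (hB : 0 ≤ B) :
    A * sPlus A B ^ 2 + (1 + B - A) * sPlus A B - B = 0 := by
  have hdiscr : discrim A (1 + B - A) (-B) =
      √((A - B - 1)^2 + 4*A*B) * √((A - B - 1)^2 + 4*A*B) := by
    rw [Real.mul_self_sqrt (by nlinarith [sq_nonneg (A + B - 1)]), discrim]
    ring
  have h := ((quadratic_eq_zero_iff hA hdiscr (sPlus A B)).2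
    (Or.inl (by unfold sPlus; field_simp; ring)))
  linear_combination h

lemma div_eq_one_sub_of_isRoot {s : ℝ} (hs : s ≠ 0)
    (hroot : A * s ^ 2 + (1 + B - A) * s - B = 0) :
    B * (1 - s) / s = 1 - A * (1 - s) := by
  rw [div_eq_iff hs]
  linear_combination -hroot

end

/-- The receiver equilibrium value `r_+ = B(1-s_+)/s_+` lies in `(0,1)`. -/
theorem rp_mem (A B : ℝ) (hA : 0 < A) (hB : 0 < B) :
    (let sp := (1/(2*A)) * (A - B - 1 + Real.sqrt ((A - B - 1)^2 + 4*A*B));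
     let rp := B * (1 - sp) / sp;
     0 < rp ∧ rp < 1) := by
  intro sp rp
  have hsp : sp = sPlus A B := rfl
  have hpos : 0 < sp := hsp ▸ sPlus_pos hA hB
  have hlt : sp < 1 := hsp ▸ sPlus_lt_one hA hB
  have hrp : rp = 1 - A * (1 - sp) :=
    div_eq_one_sub_of_isRoot hpos.ne' (hsp ▸ sPlus_isRoot hA.ne' hB.le)
  refine ⟨div_pos (mul_pos hB (sub_pos.2 hlt)) hpos, ?_⟩
  rw [hrp]
  linarith [mul_pos hA (sub_pos.2 hlt)]
end

section
/- Fix positive parameters α, β, γ, M, N and define f : ℝ² → ℝ² by f(R,S) = (α(1-R) - β(M/N)RS, γ(1-S) - β(N/M)RS). The point (R*, S*) with S* = (1/(2A))(A-B-1 + sqrt((A-B-1)^2 + 4AB)), R* = B(1-S*)/S*, where A = γM²/(αN²) and B = γM/(βN), satisfies f(R*,S*) = (0,0). -/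
open Real

/-!
Put `A = γM²/(αN²)` and `B = γM/(βN)`, so that `β(M/N) = αA/B` and `β(N/M) = γ/B`. The second
component of `f` then vanishes iff `RS = B(1 - S)`, i.e. `R = B(1 - S)/S`, and substituting this
into the first component leaves the quadratic `AS² + (1 + B - A)S - B = 0`, of which `S*` is the
root with the `+√` sign. Since `AB > 0`, the square root exceeds `|A - B - 1|`, so `S* > 0` and
`R*` is not a junk quotient.
-/

noncomputable def supplierEquilibrium (A B : ℝ) : ℝ :=
  (1 / (2 * A)) * (A - B - 1 + √((A - B - 1) ^ 2 + 4 * A * B))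

lemma supplierEquilibrium_isRoot {A B : ℝ} (hA : A ≠ 0) (hAB : 0 ≤ A * B) :
    A * supplierEquilibrium A B ^ 2 + (1 + B - A) * supplierEquilibrium A B - B = 0 := by
  have hdiscrim : discrim A (1 + B - A) (-B) =
      √((A - B - 1) ^ 2 + 4 * A * B) * √((A - B - 1) ^ 2 + 4 * A * B) := by
    rw [mul_self_sqrt (by nlinarith [sq_nonneg (A - B - 1)]), discrim]
    ring
  have hroot := (quadratic_eq_zero_iff hA hdiscrim (supplierEquilibrium A B)).2 <| Or.inl <| by
    rw [supplierEquilibrium]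
    field_simp
    ring
  linear_combination hroot

lemma supplierEquilibrium_pos {A B : ℝ} (hA : 0 < A) (hB : 0 < B) :
    0 < supplierEquilibrium A B := by
  have hsqrt : -(A - B - 1) < √((A - B - 1) ^ 2 + 4 * A * B) :=
    calc -(A - B - 1) ≤ |A - B - 1| := neg_le_abs _
      _ = √((A - B - 1) ^ 2) := (sqrt_sq_eq_abs _).symm
      _ < √((A - B - 1) ^ 2 + 4 * A * B) := sqrt_lt_sqrt (sq_nonneg _) (by nlinarith)
  unfold supplierEquilibrium
  have hnumerator : 0 < A - B - 1 + √((A - B - 1) ^ 2 + 4 * A * B) := by linarith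
  positivity

/-- The field divided by `(α, γ)`, in the parameters `A` and `B`. -/
lemma normalized_field_eq_zero {A B S : ℝ} (hB : B ≠ 0) (hS : S ≠ 0)
    (hroot : A * S ^ 2 + (1 + B - A) * S - B = 0) :
    (1 - B * (1 - S) / S) - A / B * (B * (1 - S) / S) * S = 0 ∧
    (1 - S) - (B * (1 - S) / S) * S / B = 0 := by
  constructor
  · field_simp
    linear_combination hroot
  · field_simp
    ring

/-- The point `(R*, S*)` built from the larger root of the equilibrium quadratic is a
zero of the vector field of the two-dimensional foraging model. -/
theorem equilibrium_is_zero (α β γ M N : ℝ) (hα : 0 < α) (hβ : 0 < β) (hγ : 0 < γ)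
    (hM : 0 < M) (hN : 0 < N) :
    (let A := γ * M^2 / (α * N^2);
     let B := γ * M / (β * N);
     let Sstar := (1/(2*A)) * (A - B - 1 + Real.sqrt ((A - B - 1)^2 + 4*A*B));
     let Rstar := B * (1 - Sstar) / Sstar;
     α * (1 - Rstar) - β * (M/N) * Rstar * Sstar = 0 ∧
     γ * (1 - Sstar) - β * (N/M) * Rstar * Sstar = 0) := by
  intro A B Sstar Rstar
  have hA : 0 < A := by positivity
  have hB : 0 < B := by positivity
  have hS : Sstar = supplierEquilibrium A B := rfl
  have hcoeff₁ : β * (M / N) = α * (A / B) := by simp only [A, B]; field_simp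
  have hcoeff₂ : β * (N / M) = γ / B := by simp only [B]; field_simp
  obtain ⟨h₁, h₂⟩ := normalized_field_eq_zero hB.ne' (hS ▸ (supplierEquilibrium_pos hA hB).ne')
    (hS ▸ supplierEquilibrium_isRoot hA.ne' (mul_pos hA hB).le)
  constructor
  · rw [hcoeff₁]
    linear_combination α * h₁
  · rw [hcoeff₂]
    linear_combination γ * h₂
end

section
/- Fix positive parameters α, β, γ, M, N. The system ẋR = α(1-R) - β(M/N)RS, ẋS = γ(1-S) - β(N/M)RS has exactly one equilibrium (R*,S*) with both coordinates in [0,1]. -/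
/-!
Eliminating `R * S` between the two equilibrium equations leaves a quadratic equation
`α b R² + (γ (a + α) - α b) R = γ α` for `R` alone (`a = β M / N`, `b = β N / M`), and the first
equation then determines `S` from `R`. The quadratic is negative at `0` and positive at `1`, so it
has a root in `(0, 1)`; since its leading coefficient is nonnegative and its constant term is
negative, it has only one positive root.
-/

open Set

theorem exists_mem_Ioo_quadratic_eq {c B d : ℝ} (hd : 0 < d) (h1 : d < c + B) :
    ∃ x ∈ Ioo (0 : ℝ) 1, c * x ^ 2 + B * x = d := by
  have hcont : ContinuousOn (fun x : ℝ => c * x ^ 2 + B * x) (Icc 0 1) := by fun_prop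
  simpa using intermediate_value_Ioo zero_le_one hcont ⟨by simpa using hd, by simpa using h1⟩

theorem eq_of_quadratic_eq_of_pos {c B d x y : ℝ} (hc : 0 ≤ c) (hd : 0 < d) (hx : 0 < x)
    (hy : 0 < y) (hqx : c * x ^ 2 + B * x = d) (hqy : c * y ^ 2 + B * y = d) : x = y := by
  have hlin : 0 < c * x + B := pos_of_mul_pos_right (by linear_combination hd - hqx) hx.le
  have hfactor : (x - y) * (c * (x + y) + B) = 0 := by linear_combination hqx - hqy
  have hsecond : 0 < c * (x + y) + B := by linarith [mul_nonneg hc hy.le]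
  exact sub_eq_zero.mp ((mul_eq_zero.mp hfactor).resolve_right hsecond.ne')

section Equilibrium

variable {a b α γ R S : ℝ}

theorem equilibrium_quadratic (h1 : α * (1 - R) - a * R * S = 0)
    (h2 : γ * (1 - S) - b * R * S = 0) :
    α * b * R ^ 2 + (γ * (a + α) - α * b) * R = γ * α := by
  linear_combination a * R * h2 - (γ + b * R) * h1

theorem equilibrium_first_pos (hα : 0 < α) (hR : 0 ≤ R) (h1 : α * (1 - R) - a * R * S = 0) :
    0 < R := by
  refine hR.lt_of_ne fun hR0 => hα.ne' ?_
  simpa [← hR0] using h1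

theorem equilibrium_second_eq (ha : 0 < a) (hR : 0 < R) (h1 : α * (1 - R) - a * R * S = 0) :
    S = α * (1 - R) / (a * R) := by
  rw [eq_div_iff (by positivity)]
  linear_combination -h1

theorem equilibrium_of_quadratic (ha : 0 < a) (hb : 0 ≤ b) (hα : 0 < α) (hγ : 0 < γ)
    (hR : R ∈ Ioo 0 1) (hq : α * b * R ^ 2 + (γ * (a + α) - α * b) * R = γ * α)
    (hS : S = α * (1 - R) / (a * R)) :
    R ∈ Icc 0 1 ∧ S ∈ Icc 0 1 ∧ α * (1 - R) - a * R * S = 0 ∧ γ * (1 - S) - b * R * S = 0 := by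
  obtain ⟨hR0, hR1⟩ := hR
  have haR : 0 < a * R := by positivity
  have hRS : a * R * S = α * (1 - R) := hS ▸ mul_div_cancel₀ _ haR.ne'
  have hSle : α * (1 - R) ≤ a * R := by
    have : γ * (a * R - α * (1 - R)) = α * b * R * (1 - R) := by linear_combination hq
    nlinarith [mul_nonneg (mul_nonneg (mul_nonneg hα.le hb) hR0.le) (sub_nonneg.mpr hR1.le)]
  have hS0 : 0 ≤ S := hS ▸ by positivity
  have hS1 : S ≤ 1 := hS ▸ (div_le_one haR).mpr hSle
  refine ⟨⟨hR0.le, hR1.le⟩, ⟨hS0, hS1⟩, by linarith, ?_⟩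
  refine (mul_right_injective₀ haR.ne').eq_iff.mp ?_
  linear_combination -(γ + b * R) * hRS + hq

theorem existsUnique_equilibrium (ha : 0 < a) (hb : 0 ≤ b) (hα : 0 < α) (hγ : 0 < γ) :
    ∃! q : ℝ × ℝ, q.1 ∈ Icc 0 1 ∧ q.2 ∈ Icc 0 1 ∧
      α * (1 - q.1) - a * q.1 * q.2 = 0 ∧ γ * (1 - q.2) - b * q.1 * q.2 = 0 := by
  obtain ⟨R, hR, hq⟩ := exists_mem_Ioo_quadratic_eq (c := α * b) (B := γ * (a + α) - α * b)
    (d := γ * α) (by positivity) (by linarith [mul_pos hγ ha])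
  refine ⟨(R, α * (1 - R) / (a * R)), equilibrium_of_quadratic ha hb hα hγ hR hq rfl, ?_⟩
  rintro ⟨R', S'⟩ ⟨hR', -, h1, h2⟩
  have hR'pos : 0 < R' := equilibrium_first_pos hα hR'.1 h1
  obtain rfl : R' = R := eq_of_quadratic_eq_of_pos (by positivity) (by positivity) hR'pos hR.1
    (equilibrium_quadratic h1 h2) hq
  exact Prod.ext rfl (equilibrium_second_eq ha hR'pos h1)

end Equilibrium

/-- The two-dimensional foraging model has exactly one equilibrium in `[0,1]²`. -/
theorem unique_equilibrium (α β γ M N : ℝ) (hα : 0 < α) (hβ : 0 < β) (hγ : 0 < γ)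
    (hM : 0 < M) (hN : 0 < N) :
    ∃! q : ℝ × ℝ, q.1 ∈ Icc (0:ℝ) 1 ∧ q.2 ∈ Icc (0:ℝ) 1 ∧
      α * (1 - q.1) - β * (M/N) * q.1 * q.2 = 0 ∧
      γ * (1 - q.2) - β * (N/M) * q.1 * q.2 = 0 :=
  existsUnique_equilibrium (by positivity) (by positivity) hα hγ
end

section
/- Fix positive parameters α, β, M, N, μ, ν, γ₀, k, p₀, n. Define h(x) = k/(1 + (p₀ / (2(ν/μ)α(N²/M)(1-x)))ⁿ) + γ₀ for x in [0,1) and h(1) = γ₀, and g(x) = αβ(N²/M)x(1-x)/(βMx - αN(1-x)). Then there exists at least one x* in (αN/(αN+βM), 1) with h(x*) = g(x*). -/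
open Real Set Filter Topology

/-!
On `(x₀, 1)`, where `x₀ = αN/(αN + βM)` is the zero of the denominator of `g`, the function
`h` is continuous with values in `[γ₀, γ₀ + k]`, since the Hill term lies in `[0, k]`. The
function `g` is continuous there, tends to `+∞` as `x ↓ x₀` and to `g 1 = 0 < γ₀` as `x ↑ 1`.
So `h < g` near `x₀` and `g < h` near `1`, and the intermediate value theorem gives a crossing.
-/

theorem Filter.Tendsto.div_atTop_of_tendsto_nhdsGT_zero {α 𝕜 : Type*} [Field 𝕜]
    [LinearOrder 𝕜] [IsStrictOrderedRing 𝕜] [TopologicalSpace 𝕜] [OrderTopology 𝕜]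
    {l : Filter α} {u v : α → 𝕜} {c : 𝕜} (hc : 0 < c) (hu : Tendsto u l (𝓝 c))
    (hv : Tendsto v l (𝓝[>] 0)) :
    Tendsto (fun x => u x / v x) l atTop := by
  have hv_inv : Tendsto (fun x => (v x)⁻¹) l atTop := tendsto_inv_nhdsGT_zero.comp hv
  simpa only [div_eq_mul_inv] using hu.pos_mul_atTop hc hv_inv

noncomputable def hill (k p₀ n p : ℝ) : ℝ := k / (1 + (p₀ / p) ^ n)

theorem hill_mem_Icc {k p₀ p : ℝ} (n : ℝ) (hk : 0 ≤ k) (hp₀ : 0 ≤ p₀) (hp : 0 ≤ p) :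
    hill k p₀ n p ∈ Icc 0 k := by
  have : 0 ≤ (p₀ / p) ^ n := by positivity
  exact ⟨by unfold hill; positivity, div_le_self hk (by linarith)⟩

theorem continuousOn_hill {p₀ : ℝ} (k n : ℝ) (hp₀ : 0 < p₀) :
    ContinuousOn (hill k p₀ n) (Ioi 0) := by
  intro p (hp : 0 < p)
  refine ContinuousAt.continuousWithinAt (continuousAt_const.div (continuousAt_const.add ?_) ?_)
  · exact (continuousAt_const.div continuousAt_id hp.ne').rpow_const
      (Or.inl (div_pos hp₀ hp).ne')
  · positivity

noncomputable def flowBalance (A a b x : ℝ) : ℝ := A * (x * (1 - x)) / (b * x - a * (1 - x))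

section flowBalance

variable {A a b : ℝ}

theorem flowBalance_denom_pos {x : ℝ} (hab : 0 < a + b) (hx : a / (a + b) < x) :
    0 < b * x - a * (1 - x) := by
  rw [div_lt_iff₀ hab] at hx
  linarith

theorem continuousOn_flowBalance (hab : 0 < a + b) :
    ContinuousOn (flowBalance A a b) (Ioi (a / (a + b))) := by
  intro x hx
  have := (flowBalance_denom_pos hab hx).ne'
  exact ContinuousAt.continuousWithinAt (by unfold flowBalance; fun_prop (disch := assumption))

theorem tendsto_flowBalance_atTop (hA : 0 < A) (ha : 0 < a) (hb : 0 < b) :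
    Tendsto (flowBalance A a b) (𝓝[>] (a / (a + b))) atTop := by
  have hab : 0 < a + b := by positivity
  set x₀ := a / (a + b) with hx₀_def
  have hdenom_x₀ : b * x₀ - a * (1 - x₀) = 0 := by
    rw [hx₀_def]
    field_simp
    ring
  have hx₀ : x₀ < 1 := (div_lt_one hab).mpr (by linarith)
  have hnum : 0 < A * (x₀ * (1 - x₀)) := mul_pos hA (mul_pos (by positivity) (by linarith))
  have hnum_tendsto : Tendsto (fun x => A * (x * (1 - x))) (𝓝[>] x₀) (𝓝 (A * (x₀ * (1 - x₀)))) :=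
    (Continuous.tendsto (by fun_prop) x₀).mono_left nhdsWithin_le_nhds
  have hdenom : Tendsto (fun x => b * x - a * (1 - x)) (𝓝[>] x₀) (𝓝[>] 0) := by
    refine tendsto_nhdsWithin_of_tendsto_nhds_of_eventually_within _ ?_ ?_
    · rw [← hdenom_x₀]
      exact (Continuous.tendsto (by fun_prop) x₀).mono_left nhdsWithin_le_nhds
    · filter_upwards [self_mem_nhdsWithin] with x hx using flowBalance_denom_pos hab hx
  exact hnum_tendsto.div_atTop_of_tendsto_nhdsGT_zero hnum hdenom

theorem tendsto_flowBalance_one (hb : b ≠ 0) : Tendsto (flowBalance A a b) (𝓝 1) (𝓝 0) := by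
  have hcont : ContinuousAt (flowBalance A a b) 1 := by
    unfold flowBalance
    fun_prop (disch := simpa using hb)
  simpa [flowBalance] using hcont.tendsto

end flowBalance

theorem equilibrium_exists_general (α β M N μ ν γ₀ k p₀ n : ℝ)
    (hα : 0 < α) (hβ : 0 < β) (hM : 0 < M) (hN : 0 < N) (hμ : 0 < μ) (hν : 0 < ν)
    (hγ₀ : 0 < γ₀) (hk : 0 < k) (hp₀ : 0 < p₀)
    (g h : ℝ → ℝ)
    (hg : ∀ x, g x = α * β * (N^2/M) * (x * (1 - x)) / (β * M * x - α * N * (1 - x)))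
    (hh : (∀ x ∈ Ico (0:ℝ) 1,
            h x = k / (1 + (p₀ / (2 * (ν/μ) * α * (N^2/M) * (1 - x))) ^ n) + γ₀) ∧
          h 1 = γ₀) :
    ∃ x ∈ Ioo (α * N / (α * N + β * M)) 1, h x = g x := by
  set x₀ := α * N / (α * N + β * M)
  set C := 2 * (ν/μ) * α * (N^2/M)
  have hx₀ : 0 < x₀ := by positivity
  have hx₀1 : x₀ < 1 := (div_lt_one (by positivity)).mpr (lt_add_of_pos_right _ (by positivity))
  have hg : g = flowBalance (α * β * (N^2/M)) (α * N) (β * M) := funext hg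
  have hh : EqOn h (fun x => hill k p₀ n (C * (1 - x)) + γ₀) (Ioo x₀ 1) :=
    fun x hx => hh.1 x ⟨hx₀.le.trans hx.1.le, hx.2⟩
  have hh_bounds : ∀ x ∈ Ioo x₀ 1, h x ∈ Icc γ₀ (k + γ₀) := fun x hx => by
    have := hill_mem_Icc (p := C * (1 - x)) n hk.le hp₀.le
      (mul_pos (by positivity) (sub_pos.mpr hx.2)).le
    rw [hh hx]
    exact ⟨le_add_of_nonneg_left this.1, add_le_add_left this.2 _⟩
  have hh_cont : ContinuousOn h (Ioo x₀ 1) := by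
    refine ContinuousOn.congr ?_ hh
    refine ((continuousOn_hill k n hp₀).comp (by fun_prop) fun x hx => ?_).add continuousOn_const
    exact mul_pos (by positivity) (sub_pos.mpr hx.2)
  have hg_cont : ContinuousOn g (Ioo x₀ 1) :=
    hg ▸ (continuousOn_flowBalance (by positivity)).mono Ioo_subset_Ioi_self
  have hg_atTop : Tendsto g (𝓝[>] x₀) atTop :=
    hg ▸ tendsto_flowBalance_atTop (by positivity) (by positivity) (by positivity)
  have hg_one : Tendsto g (𝓝 1) (𝓝 0) := hg ▸ tendsto_flowBalance_one (by positivity)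
  have h_le_g : h ≤ᶠ[𝓝[>] x₀] g := by
    filter_upwards [hg_atTop.eventually_ge_atTop (k + γ₀), Ioo_mem_nhdsGT hx₀1] with x hgx hx
    exact (hh_bounds x hx).2.trans hgx
  have g_le_h : g ≤ᶠ[𝓝[<] 1] h := by
    filter_upwards [nhdsWithin_le_nhds (hg_one.eventually (ge_mem_nhds hγ₀)),
      Ioo_mem_nhdsLT hx₀1] with x hgx hx
    exact hgx.trans (hh_bounds x hx).1
  exact isPreconnected_Ioo.intermediate_value₂_eventually₂
    (le_principal_iff.mpr (Ioo_mem_nhdsGT hx₀1)) (le_principal_iff.mpr (Ioo_mem_nhdsLT hx₀1))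
    hh_cont hg_cont h_le_g g_le_h

/-- Existence of an equilibrium: the curves `h` (pheromone feedback) and `g`
(flow balance) intersect in `(αN/(αN+βM), 1)`. -/
theorem equilibrium_exists (α β M N μ ν γ₀ k p₀ n : ℝ)
    (hα : 0 < α) (hβ : 0 < β) (hM : 0 < M) (hN : 0 < N) (hμ : 0 < μ) (hν : 0 < ν)
    (hγ₀ : 0 < γ₀) (hk : 0 < k) (hp₀ : 0 < p₀) (hn : 0 < n)
    (g h : ℝ → ℝ)
    (hg : ∀ x, g x = α * β * (N^2/M) * (x * (1 - x)) / (β * M * x - α * N * (1 - x)))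
    (hh : (∀ x ∈ Ico (0:ℝ) 1,
            h x = k / (1 + (p₀ / (2 * (ν/μ) * α * (N^2/M) * (1 - x))) ^ n) + γ₀) ∧
          h 1 = γ₀) :
    ∃ x ∈ Ioo (α * N / (α * N + β * M)) 1, h x = g x :=
  equilibrium_exists_general α β M N μ ν γ₀ k p₀ n hα hβ hM hN hμ hν hγ₀ hk hp₀ g h hg hh
end
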